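/- Let H be a hybrid quantum–classical Hamiltonian on Fin n × Fin m, H = (Matrix.diagonal ε ⊗ₖ 1) + (1 ⊗ₖ H_Q) + ∑ i, (γ i : ℂ) • (Matrix.stdBasisMatrix i i 1 ⊗ₖ S i). For every classical basis index i₀ : Fin n, every t : ℝ and every complex matrix ρ indexed by Fin n × Fin m, the probability weight of the classical pure state i₀ is invariant under the hybrid evolution: Matrix.trace ((Matrix.stdBasisMatrix i₀ i₀ 1 ⊗ₖ 1) * (Matrix.exp ℂ (-(t • Complex.I) • H) * ρ * Matrix.exp ℂ ((t • Complex.I) • H))) = Matrix.trace ((Matrix.stdBasisMatrix i₀ i₀ 1 ⊗ₖ 1) * ρ). (The classical probability distribution over the single classical basis is unchanged by any hybrid Hamiltonian dynamics.) -/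

import Mathlib

open Matrix Kronecker

/-!
Every term of the hybrid Hamiltonian has the form `diagonal e ⊗ₖ B` (note
`single i i 1 = diagonal (Pi.single i 1)` and `1 = diagonal 1`), so it commutes with the
projector `single i₀ i₀ 1 ⊗ₖ 1 = diagonal (Pi.single i₀ 1) ⊗ₖ 1`. The projector then commutes
with the propagator `exp (-(t • I) • H)`, and cyclicity of the trace cancels the two
exponentials.
-/

theorem Commute.kronecker {l m α : Type*} [Fintype l] [Fintype m] [CommSemiring α]
    {A C : Matrix l l α} {B D : Matrix m m α} (hAC : Commute A C) (hBD : Commute B D) :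
    Commute (A ⊗ₖ B) (C ⊗ₖ D) := by
  rw [commute_iff_eq, ← mul_kronecker_mul, ← mul_kronecker_mul, hAC.eq, hBD.eq]

namespace Matrix

theorem commute_diagonal_kronecker_one {l m α : Type*} [Fintype l] [DecidableEq l]
    [Fintype m] [DecidableEq m] [CommSemiring α] (d e : l → α) (B : Matrix m m α) :
    Commute (diagonal d ⊗ₖ (1 : Matrix m m α)) (diagonal e ⊗ₖ B) :=
  (commute_diagonal d e).kronecker (Commute.one_left B)

variable {ι 𝔸 : Type*} [Fintype ι] [DecidableEq ι]
  [NormedCommRing 𝔸] [NormedAlgebra ℚ 𝔸] [CompleteSpace 𝔸]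

theorem exp_mul_exp_neg (A : Matrix ι ι 𝔸) :
    NormedSpace.exp A * NormedSpace.exp (-A) = 1 := by
  rw [← exp_add_of_commute _ _ (Commute.refl A).neg_right, add_neg_cancel, NormedSpace.exp_zero]

theorem trace_mul_exp_neg_mul_mul_exp_of_commute {P A : Matrix ι ι 𝔸} (h : Commute P A)
    (ρ : Matrix ι ι 𝔸) :
    trace (P * (NormedSpace.exp (-A) * ρ * NormedSpace.exp A)) = trace (P * ρ) := by
  have hP : Commute P (NormedSpace.exp (-A)) := h.neg_right.exp_right
  calc trace (P * (NormedSpace.exp (-A) * ρ * NormedSpace.exp A))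
      = trace (NormedSpace.exp (-A) * (P * ρ) * NormedSpace.exp A) := by
        rw [← mul_assoc, ← mul_assoc, hP.eq, mul_assoc _ P]
    _ = trace (NormedSpace.exp A * (NormedSpace.exp (-A) * (P * ρ))) := trace_mul_comm _ _
    _ = trace (P * ρ) := by rw [← mul_assoc, exp_mul_exp_neg, one_mul]

end Matrix

/-- The probability weight of each classical pure state is invariant under any
hybrid Hamiltonian evolution. -/
theorem classical_pure_state_weight_conserved_under_hybrid_evolution
    (n m : ℕ)
    (ε γ : Fin n → ℝ)
    (H_Q : Matrix (Fin m) (Fin m) ℂ)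
    (S : Fin n → Matrix (Fin m) (Fin m) ℂ)
    (H : Matrix (Fin n × Fin m) (Fin n × Fin m) ℂ)
    (hH : H = (Matrix.diagonal (fun i => (ε i : ℂ)) ⊗ₖ 1)
        + ((1 : Matrix (Fin n) (Fin n) ℂ) ⊗ₖ H_Q)
        + ∑ i : Fin n, (γ i : ℂ) • (Matrix.single i i 1 ⊗ₖ S i))
    (i₀ : Fin n) (t : ℝ)
    (ρ : Matrix (Fin n × Fin m) (Fin n × Fin m) ℂ) :
    Matrix.trace ((Matrix.single i₀ i₀ (1 : ℂ) ⊗ₖ (1 : Matrix (Fin m) (Fin m) ℂ))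
        * (NormedSpace.exp (-(t • Complex.I) • H) * ρ * NormedSpace.exp ((t • Complex.I) • H)))
      = Matrix.trace ((Matrix.single i₀ i₀ (1 : ℂ) ⊗ₖ (1 : Matrix (Fin m) (Fin m) ℂ)) * ρ) := by
  have hPH : Commute (single i₀ i₀ (1 : ℂ) ⊗ₖ (1 : Matrix (Fin m) (Fin m) ℂ)) H := by
    simp only [hH, ← diagonal_single, ← diagonal_one]
    exact ((commute_diagonal_kronecker_one _ _ _).add_right
      (commute_diagonal_kronecker_one _ _ _)).add_right
      (Commute.sum_right _ _ _ fun i _ => (commute_diagonal_kronecker_one _ _ _).smul_right _)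
  rw [neg_smul]
  exact trace_mul_exp_neg_mul_mul_exp_of_commute (hPH.smul_right _) ρ
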